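/- arXiv:2006.12608 — 3 statements merged into one kernel-verified Lean document; each statement's English description precedes it below -/
import Mathlib

section
/- If a random matrix M satisfies the (ε√(2/e), δ, p)-JL-moment property for every p ∈ [2, log(1/δ)], then M satisfies the (ε,δ)-Strong JL Moment Property. This relies on the inequality δ^{1/p} ≤ (1/√(2e))·√(p/log(1/δ)) for all 2 ≤ p ≤ log(1/δ). -/
open MeasureTheory ProbabilityTheory Finset

lemma key_ineq (ε δ : ℝ) (hε : 0 < ε) (hδ : 0 < δ) (hδ1 : δ < 1)
    (p : ℝ) (hp2 : 2 ≤ p) (hpL : p ≤ Real.log (1 / δ)) :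
    (ε * Real.sqrt (2 / Real.exp 1)) * δ ^ (1 / p)
      ≤ (ε / Real.exp 1) * Real.sqrt (p / Real.log (1 / δ)) := by
  set L := Real.log (1 / δ) with hLdef
  have hp0 : (0:ℝ) < p := by linarith
  have hL0 : (0:ℝ) < L := by linarith
  have hlogδ : Real.log δ = -L := by
    rw [hLdef, one_div, Real.log_inv]; ring
  have hδp : δ ^ (1 / p) = Real.exp (-(L / p)) := by
    rw [Real.rpow_def_of_pos hδ, hlogδ]; ring_nf
  set t := L / p with htdef
  have ht1 : (1:ℝ) ≤ t := (one_le_div hp0).mpr hpL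
  have ht0 : (0:ℝ) < t := by linarith
  have he : (0:ℝ) < Real.exp 1 := Real.exp_pos 1
  -- key: 2 e t ≤ exp (2t)
  have hkey : 2 * Real.exp 1 * t ≤ Real.exp (2 * t) := by
    have h1 : (2 * t - 1) + 1 ≤ Real.exp (2 * t - 1) := Real.add_one_le_exp _
    have h2 : Real.exp (2 * t) = Real.exp (2 * t - 1) * Real.exp 1 := by
      rw [← Real.exp_add]; ring_nf
    rw [h2]
    calc 2 * Real.exp 1 * t = (2 * t) * Real.exp 1 := by ring
      _ ≤ Real.exp (2 * t - 1) * Real.exp 1 := by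
          apply mul_le_mul_of_nonneg_right (by linarith) he.le
  have hexp2 : Real.exp (-(L/p)) ^ 2 = (Real.exp (2 * t))⁻¹ := by
    rw [sq, ← Real.exp_add, ← Real.exp_neg]
    congr 1
    rw [htdef]; ring
  -- compare squares
  have hLHS0 : 0 ≤ (ε * Real.sqrt (2 / Real.exp 1)) * δ ^ (1 / p) := by
    positivity
  have hRHS0 : 0 ≤ (ε / Real.exp 1) * Real.sqrt (p / L) := by positivity
  have hsq : ((ε * Real.sqrt (2 / Real.exp 1)) * δ ^ (1 / p)) ^ 2
      ≤ ((ε / Real.exp 1) * Real.sqrt (p / L)) ^ 2 := by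
    have h1 : Real.sqrt (2 / Real.exp 1) ^ 2 = 2 / Real.exp 1 :=
      Real.sq_sqrt (by positivity)
    have h2 : Real.sqrt (p / L) ^ 2 = p / L := Real.sq_sqrt (by positivity)
    have hpt : p / L = t⁻¹ := by
      rw [htdef, inv_div]
    rw [hδp]
    have hE : (0:ℝ) < Real.exp (2 * t) := Real.exp_pos _
    calc ((ε * Real.sqrt (2 / Real.exp 1)) * Real.exp (-(L/p))) ^ 2
        = ε ^ 2 * (2 / Real.exp 1) * (Real.exp (2*t))⁻¹ := by
          rw [mul_pow, mul_pow, h1, hexp2]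
      _ ≤ ε ^ 2 / Real.exp 1 ^ 2 * t⁻¹ := by
          have h1' : ε ^ 2 * (2 / Real.exp 1) * (Real.exp (2*t))⁻¹
              = ε ^ 2 * 2 / (Real.exp 1 * Real.exp (2*t)) := by
            field_simp
          have h2' : ε ^ 2 / Real.exp 1 ^ 2 * t⁻¹ = ε ^ 2 / (Real.exp 1 ^ 2 * t) := by
            field_simp
          rw [h1', h2', div_le_div_iff₀ (by positivity) (by positivity)]
          nlinarith [mul_le_mul_of_nonneg_left
            (mul_le_mul_of_nonneg_left hkey (sq_nonneg ε)) he.le]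
      _ = ((ε / Real.exp 1) * Real.sqrt (p / L)) ^ 2 := by
          rw [mul_pow, h2, hpt, div_pow]
  calc (ε * Real.sqrt (2 / Real.exp 1)) * δ ^ (1 / p)
      = Real.sqrt (((ε * Real.sqrt (2 / Real.exp 1)) * δ ^ (1 / p)) ^ 2) :=
        (Real.sqrt_sq hLHS0).symm
    _ ≤ Real.sqrt (((ε / Real.exp 1) * Real.sqrt (p / L)) ^ 2) :=
        Real.sqrt_le_sqrt hsq
    _ = (ε / Real.exp 1) * Real.sqrt (p / L) := Real.sqrt_sq hRHS0

/-- If `M` has the `(ε√(2/e), δ, p)`-JL-moment property for every `p ∈ [2, log(1/δ)]`,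
then `M` has the `(ε,δ)`-Strong JL Moment Property. -/
theorem stmt2 {Ω : Type*} [MeasureSpace Ω] [IsProbabilityMeasure (ℙ : Measure Ω)]
    {m d : ℕ} (M : Ω → Matrix (Fin m) (Fin d) ℝ)
    (ε δ : ℝ) (hε : 0 < ε) (hε1 : ε < 1) (hδ : 0 < δ) (hδ1 : δ < 1)
    (hL : 2 ≤ Real.log (1 / δ))
    (hmean : ∀ x : Fin d → ℝ, ∑ j, x j ^ 2 = 1 →
      (∫ ω, ∑ i, ((M ω).mulVec x i) ^ 2) = 1)
    (hmom : ∀ p : ℝ, 2 ≤ p → p ≤ Real.log (1 / δ) →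
      ∀ x : Fin d → ℝ, ∑ j, x j ^ 2 = 1 →
        (∫ ω, |∑ i, ((M ω).mulVec x i) ^ 2 - 1| ^ p) ^ (1 / p)
          ≤ (ε * Real.sqrt (2 / Real.exp 1)) * δ ^ (1 / p)) :
    ∀ x : Fin d → ℝ, ∑ j, x j ^ 2 = 1 →
      ∀ p : ℝ, 2 ≤ p → p ≤ Real.log (1 / δ) →
        (∫ ω, |∑ i, ((M ω).mulVec x i) ^ 2 - 1| ^ p) ^ (1 / p)
          ≤ (ε / Real.exp 1) * Real.sqrt (p / Real.log (1 / δ)) := by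
  intro x hx p hp2 hpL
  exact (hmom p hp2 hpL x hx).trans (key_ineq ε δ hε hδ hδ1 p hp2 hpL)
end

section
/- For all real δ ∈ (0,1) with log(1/δ) ≥ 2 and all real p with 2 ≤ p ≤ log(1/δ), one has δ^{1/p} ≤ (1/√(2e))·√(p/log(1/δ)). -/
open Real

/- With `t = 1 / s`, squaring turns the claim into `exp 1 * (2 t) ≤ exp (2 t)`. -/
theorem exp_neg_inv_le_one_div_sqrt_mul_sqrt {s : ℝ} (hs : 0 < s) :
    exp (-s⁻¹) ≤ 1 / √(2 * exp 1) * √s := by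
  have key : exp 1 * (2 * s⁻¹) ≤ exp (2 * s⁻¹) := exp_one_mul_le_exp
  have hrhs : 1 / √(2 * exp 1) * √s = √(s / (2 * exp 1)) := by
    rw [one_div, ← sqrt_inv, ← sqrt_mul (by positivity), inv_mul_eq_div]
  rw [hrhs, le_sqrt (exp_pos _).le (by positivity), ← exp_nat_mul,
    le_div_iff₀ (by positivity)]
  calc exp (↑2 * -s⁻¹) * (2 * exp 1) = exp (-(2 * s⁻¹)) * (exp 1 * (2 * s⁻¹)) * s := by
        field_simp
    _ ≤ exp (-(2 * s⁻¹)) * exp (2 * s⁻¹) * s := by gcongr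
    _ = s := by rw [← exp_add, neg_add_cancel, exp_zero, one_mul]

theorem stmt3_general (δ p : ℝ) (hδ : 0 < δ)
    (hL : 2 ≤ Real.log (1 / δ)) (hp2 : 2 ≤ p) :
    δ ^ (1 / p) ≤ (1 / Real.sqrt (2 * Real.exp 1)) * Real.sqrt (p / Real.log (1 / δ)) := by
  have hδ_eq : δ ^ (1 / p) = exp (-(p / log (1 / δ))⁻¹) := by
    rw [rpow_def_of_pos hδ, inv_div, one_div δ, log_inv]
    ring_nf
  rw [hδ_eq]
  exact exp_neg_inv_le_one_div_sqrt_mul_sqrt (div_pos (by linarith) (by linarith))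

/-- For `δ ∈ (0,1)` with `log(1/δ) ≥ 2` and `2 ≤ p ≤ log(1/δ)`,
`δ^(1/p) ≤ (1/√(2e))·√(p/log(1/δ))`. -/
theorem stmt3 (δ p : ℝ) (hδ : 0 < δ) (hδ1 : δ < 1)
    (hL : 2 ≤ Real.log (1 / δ)) (hp2 : 2 ≤ p) (hpL : p ≤ Real.log (1 / δ)) :
    δ ^ (1 / p) ≤ (1 / Real.sqrt (2 * Real.exp 1)) * Real.sqrt (p / Real.log (1 / δ)) :=
  stmt3_general δ p hδ hL hp2
end

section
/- For any unit vector x ∈ R^{kd}, if x is written as the concatenation of k blocks x₁,…,x_k ∈ R^d, then for any matrix Q ∈ R^{m×d}, ‖(I_k ⊗ Q)x‖₂² = Σᵢ ‖Q xᵢ‖₂². Consequently, if a random matrix Q ∈ R^{m×d} has the (ε,δ,p)-JL moment property, then I_k ⊗ Q ∈ R^{km×kd} also has the (ε,δ,p)-JL moment property. -/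
/-!
The Kronecker product `I_k ⊗ Q` acts blockwise, so with `c j = ‖x_j‖²` and `y j = x_j / ‖x_j‖`
one has `‖(I_k ⊗ Q) x‖² = ∑ j, c j * ‖Q (y j)‖²`, a convex combination of statistics of unit
vectors. The mean passes through by linearity. For the moment, Minkowski's inequality in `Lᵖ`
gives `‖∑ j, c j • (‖Q (y j)‖² - 1)‖_p ≤ ∑ j, c j * ‖‖Q (y j)‖² - 1‖_p`; each block is in `Lᵖ`
as soon as the whole sum is, being dominated by it up to the factor `(c j)⁻¹`.
-/

open MeasureTheory ProbabilityTheory Finset Kronecker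

section Kronecker

variable {R l m n : Type*} [Semiring R] [Fintype l] [DecidableEq l] [Fintype n]

theorem Matrix.one_kronecker_mulVec_apply (B : Matrix m n R) (x : l × n → R) (j : l) (i : m) :
    ((1 : Matrix l l R) ⊗ₖ B).mulVec x (j, i) = B.mulVec (fun t => x (j, t)) i := by
  simp [Matrix.mulVec, dotProduct, Fintype.sum_prod_type, Matrix.one_apply, ite_mul,
    Finset.sum_ite_eq]

theorem Matrix.sum_sq_one_kronecker_mulVec [Fintype m] (B : Matrix m n R) (x : l × n → R) :
    ∑ q : l × m, (((1 : Matrix l l R) ⊗ₖ B).mulVec x q) ^ 2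
      = ∑ j : l, ∑ i : m, (B.mulVec (fun t => x (j, t)) i) ^ 2 := by
  simp only [Fintype.sum_prod_type, Matrix.one_kronecker_mulVec_apply]

end Kronecker

section Normalize

variable {m n : Type*} [Fintype m] [Fintype n]

theorem sum_sq_inv_sqrt_smul_eq_one {v : n → ℝ} (hv : ∑ t, v t ^ 2 ≠ 0) :
    ∑ t, ((√(∑ s, v s ^ 2))⁻¹ • v) t ^ 2 = 1 := by
  simp only [Pi.smul_apply, smul_eq_mul, mul_pow, ← Finset.mul_sum, inv_pow,
    Real.sq_sqrt (Finset.sum_nonneg fun t _ => sq_nonneg (v t))]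
  exact inv_mul_cancel₀ hv

theorem Matrix.sum_sq_mulVec_eq_mul_inv_sqrt_smul (B : Matrix m n ℝ) (v : n → ℝ) :
    ∑ i, (B.mulVec v i) ^ 2
      = (∑ t, v t ^ 2) * ∑ i, (B.mulVec ((√(∑ s, v s ^ 2))⁻¹ • v) i) ^ 2 := by
  have hc : 0 ≤ ∑ t, v t ^ 2 := Finset.sum_nonneg fun t _ => sq_nonneg (v t)
  by_cases hv : ∑ t, v t ^ 2 = 0
  · have : v = 0 := funext fun t =>
      pow_eq_zero_iff two_ne_zero |>.mp ((Finset.sum_eq_zero_iff_of_nonneg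
        fun s _ => sq_nonneg (v s)).mp hv t (Finset.mem_univ t))
    simp [this]
  · simp only [Matrix.mulVec_smul, Pi.smul_apply, smul_eq_mul, mul_pow, ← Finset.mul_sum,
      inv_pow, Real.sq_sqrt hc, mul_inv_cancel_left₀ hv]

end Normalize

section ConvexCombination

variable {Ω ι : Type*} [MeasurableSpace Ω] {μ : Measure Ω} [Fintype ι]
  {c : ι → ℝ} {g : ι → Ω → ℝ}

theorem integrable_const_mul_of_ne_zero_imp {a : ℝ} {f : Ω → ℝ} (hf : a ≠ 0 → Integrable f μ) :
    Integrable (fun ω => a * f ω) μ := by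
  by_cases ha : a = 0
  · simp [ha]
  · exact (hf ha).const_mul a

theorem MeasureTheory.MemLp.eLpNorm_ofReal_eq {f : Ω → ℝ} {p : ℝ} (hp : 0 < p)
    (hf : MemLp f (ENNReal.ofReal p) μ) :
    eLpNorm f (ENNReal.ofReal p) μ = ENNReal.ofReal ((∫ ω, |f ω| ^ p ∂μ) ^ (1 / p)) := by
  rw [hf.eLpNorm_eq_integral_rpow_norm (by simpa using hp) ENNReal.ofReal_ne_top,
    ENNReal.toReal_ofReal hp.le, one_div]
  simp only [Real.norm_eq_abs]

theorem memLp_ofReal_of_integrable_abs_rpow {f : Ω → ℝ} {p : ℝ} (hp : 0 < p)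
    (hf : AEStronglyMeasurable f μ) (h : Integrable (fun ω => |f ω| ^ p) μ) :
    MemLp f (ENNReal.ofReal p) μ := by
  refine (integrable_norm_rpow_iff hf (by simpa using hp) ENNReal.ofReal_ne_top).mp ?_
  simpa only [Real.norm_eq_abs, ENNReal.toReal_ofReal hp.le] using h

theorem integral_sum_mul_eq_one (hcs : ∑ j, c j = 1) (hg : ∀ j, c j ≠ 0 → ∫ ω, g j ω ∂μ = 1) :
    ∫ ω, ∑ j, c j * g j ω ∂μ = 1 := by
  have hint : ∀ j, c j ≠ 0 → Integrable (g j) μ := fun j hj =>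
    .of_integral_ne_zero (by simp [hg j hj])
  rw [integral_finsetSum _ fun j _ => integrable_const_mul_of_ne_zero_imp (hint j), ← hcs]
  refine Finset.sum_congr rfl fun j _ => ?_
  by_cases hj : c j = 0
  · simp [hj]
  · rw [integral_const_mul, hg j hj, mul_one]

theorem memLp_of_memLp_sum_mul (hc : ∀ j, 0 ≤ c j) (hg : ∀ j ω, 0 ≤ g j ω) {p : ENNReal}
    (hF : MemLp (fun ω => ∑ j, c j * g j ω) p μ) {j : ι} (hj : c j ≠ 0)
    (hgj : AEStronglyMeasurable (g j) μ) : MemLp (g j) p μ := by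
  have hterm : MemLp (c j • g j) p μ := by
    refine hF.of_le (hgj.const_smul (c j)) (Filter.Eventually.of_forall fun ω => ?_)
    have hle : c j * g j ω ≤ ∑ i, c i * g i ω :=
      Finset.single_le_sum (f := fun i => c i * g i ω) (fun i _ => mul_nonneg (hc i) (hg i ω))
        (Finset.mem_univ j)
    simp only [Pi.smul_apply, smul_eq_mul, Real.norm_eq_abs,
      abs_of_nonneg (mul_nonneg (hc j) (hg j ω))]
    exact hle.trans (le_abs_self _)
  simpa [inv_smul_smul₀ hj] using hterm.const_smul (c j)⁻¹

theorem integral_abs_sum_mul_sub_one_rpow_le [IsFiniteMeasure μ] {p r : ℝ} (hp : 1 ≤ p)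
    (hr : 0 ≤ r) (hc : ∀ j, 0 ≤ c j) (hcs : ∑ j, c j = 1) (hg : ∀ j ω, 0 ≤ g j ω)
    (hint : ∀ j, c j ≠ 0 → Integrable (g j) μ)
    (hmom : ∀ j, c j ≠ 0 → (∫ ω, |g j ω - 1| ^ p ∂μ) ^ (1 / p) ≤ r) :
    (∫ ω, |∑ j, c j * g j ω - 1| ^ p ∂μ) ^ (1 / p) ≤ r := by
  have hp0 : 0 < p := zero_lt_one.trans_le hp
  set q := ENNReal.ofReal p
  set F : Ω → ℝ := fun ω => ∑ j, c j * g j ω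
  by_cases hI : Integrable (fun ω => |F ω - 1| ^ p) μ
  swap
  -- the integral then takes its junk value `0`
  · rwa [integral_undef hI, Real.zero_rpow (one_div_ne_zero hp0.ne')]
  have hF1 : MemLp (fun ω => F ω - 1) q μ := memLp_ofReal_of_integrable_abs_rpow hp0
    ((integrable_finsetSum _ fun j _ => integrable_const_mul_of_ne_zero_imp (hint j)).aestronglyMeasurable.sub
      aestronglyMeasurable_const) hI
  have hF : MemLp F q μ := by
    convert hF1.add (memLp_const (1 : ℝ)) using 1
    funext ω
    simp
  have hblock : ∀ j, c j ≠ 0 → eLpNorm (fun ω => g j ω - 1) q μ ≤ ENNReal.ofReal r := by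
    intro j hj
    have hgj : MemLp (fun ω => g j ω - 1) q μ :=
      (memLp_of_memLp_sum_mul hc hg hF hj (hint j hj).aestronglyMeasurable).sub (memLp_const 1)
    rw [hgj.eLpNorm_ofReal_eq hp0]
    exact ENNReal.ofReal_le_ofReal (hmom j hj)
  have hsplit : (fun ω => F ω - 1) = ∑ j, c j • fun ω => g j ω - 1 := by
    funext ω
    simp only [F, Finset.sum_apply, Pi.smul_apply, smul_eq_mul, mul_sub, mul_one,
      Finset.sum_sub_distrib, hcs]
  have hminkowski : eLpNorm (fun ω => F ω - 1) q μ ≤ ENNReal.ofReal r :=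
    calc eLpNorm (fun ω => F ω - 1) q μ
        ≤ ∑ j, eLpNorm (c j • fun ω => g j ω - 1) q μ := by
          rw [hsplit]
          refine eLpNorm_sum_le (fun j _ => ?_) (ENNReal.one_le_ofReal.mpr hp)
          by_cases hj : c j = 0
          · simpa [hj] using aestronglyMeasurable_zero
          · exact ((hint j hj).aestronglyMeasurable.sub aestronglyMeasurable_const).const_smul _
      _ ≤ ∑ j, ENNReal.ofReal (c j) * ENNReal.ofReal r := by
          refine Finset.sum_le_sum fun j _ => ?_
          rw [eLpNorm_const_smul, Real.enorm_eq_ofReal (hc j)]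
          by_cases hj : c j = 0
          · simp [hj]
          · exact mul_le_mul_right (hblock j hj) _
      _ = ENNReal.ofReal r := by
          rw [← Finset.sum_mul, ← ENNReal.ofReal_sum_of_nonneg fun j _ => hc j, hcs,
            ENNReal.ofReal_one, one_mul]
  rwa [hF1.eLpNorm_ofReal_eq hp0, ENNReal.ofReal_le_ofReal_iff hr] at hminkowski

end ConvexCombination

/-- For any unit `x ∈ ℝ^{kd}` split into `k` blocks, `‖(I_k ⊗ Q)x‖₂² = Σⱼ ‖Q xⱼ‖₂²`;
consequently if a random `Q` has the `(ε,δ,p)`-JL moment property, so does `I_k ⊗ Q`. -/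
theorem stmt4 {Ω : Type*} [MeasureSpace Ω] [IsProbabilityMeasure (ℙ : Measure Ω)]
    {k m d : ℕ} (Q : Ω → Matrix (Fin m) (Fin d) ℝ)
    (ε δ p : ℝ) (hε : 0 < ε) (hδ : 0 < δ) (hp : 1 ≤ p)
    (hmean : ∀ y : Fin d → ℝ, ∑ j, y j ^ 2 = 1 →
      (∫ ω, ∑ i, ((Q ω).mulVec y i) ^ 2) = 1)
    (hmom : ∀ y : Fin d → ℝ, ∑ j, y j ^ 2 = 1 →
      (∫ ω, |∑ i, ((Q ω).mulVec y i) ^ 2 - 1| ^ p) ^ (1 / p) ≤ ε * δ ^ (1 / p)) :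
    (∀ (B : Matrix (Fin m) (Fin d) ℝ) (x : Fin k × Fin d → ℝ), ∑ q, x q ^ 2 = 1 →
      ∑ q : Fin k × Fin m, (((1 : Matrix (Fin k) (Fin k) ℝ) ⊗ₖ B).mulVec x q) ^ 2
        = ∑ j : Fin k, ∑ i : Fin m, (B.mulVec (fun t => x (j, t)) i) ^ 2)
    ∧
    (∀ x : Fin k × Fin d → ℝ, ∑ q, x q ^ 2 = 1 →
      (∫ ω, ∑ q : Fin k × Fin m,
          (((1 : Matrix (Fin k) (Fin k) ℝ) ⊗ₖ Q ω).mulVec x q) ^ 2) = 1 ∧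
      (∫ ω, |(∑ q : Fin k × Fin m,
          (((1 : Matrix (Fin k) (Fin k) ℝ) ⊗ₖ Q ω).mulVec x q) ^ 2) - 1| ^ p) ^ (1 / p)
        ≤ ε * δ ^ (1 / p)) := by
  refine ⟨fun B x _ => Matrix.sum_sq_one_kronecker_mulVec B x, fun x hx => ?_⟩
  set c : Fin k → ℝ := fun j => ∑ t, x (j, t) ^ 2
  set y : Fin k → Fin d → ℝ := fun j => (√(c j))⁻¹ • fun t => x (j, t)
  have hc : ∀ j, 0 ≤ c j := fun j => Finset.sum_nonneg fun t _ => sq_nonneg _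
  have hcs : ∑ j, c j = 1 := by rw [← hx, Fintype.sum_prod_type]
  have hy : ∀ j, c j ≠ 0 → ∑ t, y j t ^ 2 = 1 := fun j hj => sum_sq_inv_sqrt_smul_eq_one hj
  have hblocks : ∀ ω, ∑ q : Fin k × Fin m,
      (((1 : Matrix (Fin k) (Fin k) ℝ) ⊗ₖ Q ω).mulVec x q) ^ 2
        = ∑ j, c j * ∑ i, ((Q ω).mulVec (y j) i) ^ 2 := fun ω => by
    rw [Matrix.sum_sq_one_kronecker_mulVec]
    exact Finset.sum_congr rfl fun j _ => Matrix.sum_sq_mulVec_eq_mul_inv_sqrt_smul _ _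
  simp only [hblocks]
  have hint : ∀ j, c j ≠ 0 → Integrable (fun ω => ∑ i, ((Q ω).mulVec (y j) i) ^ 2) :=
    fun j hj => .of_integral_ne_zero (by simp [hmean _ (hy j hj)])
  exact ⟨integral_sum_mul_eq_one hcs fun j hj => hmean _ (hy j hj),
    integral_abs_sum_mul_sub_one_rpow_le hp (by positivity) hc hcs
      (fun j ω => Finset.sum_nonneg fun i _ => sq_nonneg _) hint fun j hj => hmom _ (hy j hj)⟩
end
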